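/- Let Q be a probability distribution on a finite set, N ≥ 2 and n, m natural numbers, and ν ∈ (0,1). Then L^𝓓_n(U_N, Q | ν, m·log₂N) ≥ L^𝓓_{min{n,m}}(U_N, Q | ν) and L^𝓜_n(U_N, Q | ν, m·log₂N) = L^𝓜_{min{n,m}}(U_N, Q | ν), where U_N is the uniform distribution on an N-element set. -/

import Mathlib

open Filter MeasureTheory Topology

section Defs

variable {α β : Type*} [Fintype α] [Fintype β]

/-- `P` is a probability distribution on the finite type `α`. -/
def IsProbDist (P : α → ℝ) : Prop := (∀ x, 0 ≤ P x) ∧ ∑ x, P x = 1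

/-- Fidelity (Bhattacharyya coefficient) of two distributions on a finite set. -/
noncomputable def fid (P Q : α → ℝ) : ℝ := ∑ x, Real.sqrt (P x * Q x)

/-- Sum of the `l` largest values of `P` (for nonnegative `P`). -/
noncomputable def topSum (P : α → ℝ) (l : ℕ) : ℝ :=
  sSup {r : ℝ | ∃ S : Finset α, S.card ≤ l ∧ r = ∑ x ∈ S, P x}

/-- `P ≺ Q`: `P` is majorized by `Q` (the underlying finite sets may differ). -/
def MajorizedBy (P : α → ℝ) (Q : β → ℝ) : Prop := ∀ l : ℕ, topSum P l ≤ topSum Q l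

open Classical in
/-- Pushforward `W(P)` of the distribution `P` under a deterministic map `W`. -/
noncomputable def push (W : α → β) (P : α → ℝ) : β → ℝ :=
  fun y => ∑ x, if W x = y then P x else 0

/-- Maximal fidelity `F^𝓓(P → Q)` among deterministic conversions. -/
noncomputable def FD (P : α → ℝ) (Q : β → ℝ) : ℝ :=
  sSup {r : ℝ | ∃ W : α → β, r = fid (push W P) Q}

/-- Maximal fidelity `F^𝓓(P → Q | ·)` among deterministic conversions routed
through a storage set with `M` elements (a storage of `N` bits has `M = 2^N`). -/
noncomputable def FDstore (P : α → ℝ) (Q : β → ℝ) (M : ℕ) : ℝ :=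
  sSup {r : ℝ | ∃ W : α → Fin M, ∃ W' : Fin M → β, r = fid (push W' (push W P)) Q}

/-- Maximal fidelity `F^𝓜(P → Q)` among majorization conversions. -/
noncomputable def FM (P : α → ℝ) (Q : β → ℝ) : ℝ :=
  sSup {r : ℝ | ∃ P'' : β → ℝ, IsProbDist P'' ∧ MajorizedBy P P'' ∧ r = fid P'' Q}

/-- Maximal fidelity `F^𝓜(P → Q | ·)` among majorization conversions routed
through a storage set with `M` elements (a storage of `N` bits has `M = 2^N`). -/
noncomputable def FMstore (P : α → ℝ) (Q : β → ℝ) (M : ℕ) : ℝ :=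
  sSup {r : ℝ | ∃ P' : Fin M → ℝ, ∃ P'' : β → ℝ,
    IsProbDist P' ∧ IsProbDist P'' ∧ MajorizedBy P P' ∧ MajorizedBy P' P'' ∧
    r = fid P'' Q}

/-- The `n`-fold i.i.d. distribution `P^n`. -/
noncomputable def iid (P : α → ℝ) (n : ℕ) : (Fin n → α) → ℝ := fun f => ∏ i, P (f i)

/-- The uniform distribution `U_N` on an `N`-element set. -/
noncomputable def unif (N : ℕ) : Fin N → ℝ := fun _ => (N : ℝ)⁻¹

/-- Shannon entropy `H(P)` (base-2 logarithm). -/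
noncomputable def ent (P : α → ℝ) : ℝ := -∑ x, P x * Real.logb 2 (P x)

/-- The varentropy `V(P) = Σ_x P(x)(−log₂P(x) − H(P))²`. -/
noncomputable def varInfo (P : α → ℝ) : ℝ :=
  ∑ x, P x * (-Real.logb 2 (P x) - ent P) ^ 2

/-- `L^𝓓(P, Q | ν)`: maximal number of copies of `Q` obtainable from `P` by a
deterministic conversion with fidelity at least `ν`. -/
noncomputable def LD (P : α → ℝ) (Q : β → ℝ) (ν : ℝ) : ℕ :=
  sSup {L : ℕ | ν ≤ FD P (iid Q L)}

/-- `L^𝓜(P, Q | ν)`. -/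
noncomputable def LM (P : α → ℝ) (Q : β → ℝ) (ν : ℝ) : ℕ :=
  sSup {L : ℕ | ν ≤ FM P (iid Q L)}

/-- `L^𝓓(P, Q | ν, ·)` via a storage set with `M` elements. -/
noncomputable def LDstore (P : α → ℝ) (Q : β → ℝ) (ν : ℝ) (M : ℕ) : ℕ :=
  sSup {L : ℕ | ν ≤ FDstore P (iid Q L) M}

/-- `L^𝓜(P, Q | ν, ·)` via a storage set with `M` elements. -/
noncomputable def LMstore (P : α → ℝ) (Q : β → ℝ) (ν : ℝ) (M : ℕ) : ℕ :=
  sSup {L : ℕ | ν ≤ FMstore P (iid Q L) M}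

/-- The `j`-th largest value `P↓(j)` of `P` (1-indexed; `0` for `j > |α|`). -/
noncomputable def sortedVal (P : α → ℝ) (j : ℕ) : ℝ := topSum P j - topSum P (j - 1)

/-- The index `J_{P,M}`. -/
noncomputable def JPM (P : α → ℝ) (M : ℕ) : ℕ :=
  sSup ({0} ∪ {j : ℕ | 1 ≤ j ∧ j ≤ M - 1 ∧
    ((∑ x, P x) - topSum P j) / ((M : ℝ) - (j : ℝ)) < sortedVal P j})

open Classical in
/-- The distribution `𝒞_M(P)` on an `M`-element set. -/
noncomputable def CM (P : α → ℝ) (M : ℕ) : Fin M → ℝ := fun j =>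
  if (j : ℕ) + 1 ≤ JPM P M then sortedVal P ((j : ℕ) + 1)
  else ((∑ x, P x) - topSum P (JPM P M)) / ((M : ℝ) - (JPM P M : ℝ))

end Defs

/-!
Dropping all but the first `min n m` coordinates turns `U_N^n` into `U_N^{min n m}`, whose
`N^{min n m} ≤ N^m` outcomes can be stored injectively; hence every deterministic conversion
of `U_N^{min n m}` factors through the storage. Comparing the numbers of copies means
comparing suprema in `ℕ`, which also needs the storage side to be bounded: through `M` storage
states the fidelity with `Q^L` is at most `M (max Q)^{L/2}`, which tends to `0` unless `Q` is a
point mass.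

For majorization, every distribution on `M` points majorizes the uniform one, and uniform
distributions are ordered by the size of their support. So the distributions reachable from
`U_N^n` through `N^m` states are exactly those majorizing the uniform distribution on
`min (N^n) (N^m) = N^{min n m}` points.
-/
section

open Finset

variable {α β γ : Type*}

def IsUniform [Fintype α] (P : α → ℝ) : Prop := ∀ x, P x = (Fintype.card α : ℝ)⁻¹

namespace IsProbDist

variable [Fintype α] {P : α → ℝ}

lemma nonempty (hP : IsProbDist P) : Nonempty α := by
  by_contra h
  rw [not_nonempty_iff] at h
  simpa using hP.2

lemma le_one (hP : IsProbDist P) (x : α) : P x ≤ 1 :=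
  hP.2 ▸ single_le_sum (fun y _ => hP.1 y) (mem_univ x)

lemma iid (hP : IsProbDist P) (k : ℕ) : IsProbDist (iid P k) := by
  refine ⟨fun f => prod_nonneg fun i _ => hP.1 (f i), ?_⟩
  simpa [hP.2, _root_.iid] using (prod_univ_sum (fun _ : Fin k => (univ : Finset α))
    (fun _ x => P x)).symm

end IsProbDist

namespace IsUniform

variable [Fintype α] {P : α → ℝ}

lemma nonneg (hP : IsUniform P) (x : α) : 0 ≤ P x := by
  rw [hP x]
  positivity

lemma isProbDist [Nonempty α] (hP : IsUniform P) : IsProbDist P :=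
  ⟨hP.nonneg, by simp [hP _]⟩

lemma iid (hP : IsUniform P) (k : ℕ) : IsUniform (iid P k) := by
  simp [IsUniform, _root_.iid, hP _]

end IsUniform

lemma isUniform_unif (N : ℕ) : IsUniform (unif N) := by
  simp [IsUniform, unif]

section Push

open scoped Classical

variable [Fintype α]

lemma sum_push_finset (W : α → β) (P : α → ℝ) (T : Finset β) :
    ∑ y ∈ T, push W P y = ∑ x with W x ∈ T, P x := by
  simp only [push]
  rw [sum_comm, sum_filter]
  simp

lemma sum_push [Fintype β] (W : α → β) (P : α → ℝ) : ∑ y, push W P y = ∑ x, P x := by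
  simpa using sum_push_finset W P univ

lemma push_nonneg {P : α → ℝ} (hP : ∀ x, 0 ≤ P x) (W : α → β) (y : β) : 0 ≤ push W P y :=
  sum_nonneg fun x _ => by split_ifs <;> simp [hP x]

lemma IsProbDist.push [Fintype β] {P : α → ℝ} (hP : IsProbDist P) (W : α → β) :
    IsProbDist (push W P) :=
  ⟨push_nonneg hP.1 W, by rw [sum_push, hP.2]⟩

lemma push_push [Fintype β] (W : α → β) (W' : β → γ) (P : α → ℝ) :
    push W' (push W P) = push (W' ∘ W) P := by
  funext z
  have h := sum_push_finset W P {y | W' y = z}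
  simp only [push, sum_filter, mem_filter, mem_univ, true_and] at h ⊢
  exact h

lemma push_eq_zero_of_notMem_range {W : α → β} (P : α → ℝ) {y : β}
    (hy : y ∉ Set.range W) : push W P y = 0 :=
  sum_eq_zero fun x _ => if_neg fun h => hy ⟨x, h⟩

lemma push_const_apply (P : α → ℝ) (b : β) : push (fun _ => b) P b = ∑ x, P x := by
  simp [push]

end Push

section TopSum

lemma topSum_le {P : α → ℝ} {l : ℕ} {c : ℝ}
    (h : ∀ S : Finset α, #S ≤ l → ∑ x ∈ S, P x ≤ c) : topSum P l ≤ c :=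
  csSup_le ⟨0, ∅, by simp⟩ fun _ ⟨S, hS, hr⟩ => hr ▸ h S hS

variable [Fintype α] {P : α → ℝ}

lemma le_topSum (hP : ∀ x, 0 ≤ P x) {l : ℕ} {S : Finset α} (hS : #S ≤ l) :
    ∑ x ∈ S, P x ≤ topSum P l := by
  refine le_csSup ⟨∑ x, P x, ?_⟩ ⟨S, hS, rfl⟩
  rintro r ⟨T, -, rfl⟩
  exact sum_le_sum_of_subset_of_nonneg (subset_univ T) fun x _ _ => hP x

lemma IsUniform.topSum_eq (hP : IsUniform P) (l : ℕ) :
    topSum P l = (min l (Fintype.card α) : ℕ) / Fintype.card α := by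
  have hsum (S : Finset α) : ∑ x ∈ S, P x = #S / Fintype.card α := by
    simp [hP _, div_eq_mul_inv]
  apply le_antisymm
  · refine topSum_le fun S hS => ?_
    rw [hsum]
    gcongr
    exact le_min hS (card_le_univ S)
  · obtain ⟨S, -, hS⟩ := exists_subset_card_eq (s := (univ : Finset α)) (n := min l (Fintype.card α))
      (by rw [card_univ]; exact min_le_right _ _)
    rw [← hS, ← hsum]
    exact le_topSum hP.nonneg (hS.le.trans (min_le_left _ _))

/-- A maximal-sum set of size `s` does the job: exchanging one of its elements for a heavier
one outside would raise the sum. -/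
lemma exists_card_eq_forall_le {s : ℕ} (hs : s ≤ Fintype.card α) :
    ∃ S : Finset α, #S = s ∧ ∀ x ∈ S, ∀ y ∉ S, P y ≤ P x := by
  classical
  obtain ⟨S, hS, hmax⟩ := exists_max_image (univ.powersetCard s) (fun S => ∑ x ∈ S, P x)
    (powersetCard_nonempty.2 (by simpa using hs))
  rw [mem_powersetCard_univ] at hS
  refine ⟨S, hS, fun x hx y hy => ?_⟩
  have hy' : y ∉ S.erase x := fun h => hy (mem_of_mem_erase h)
  have hswap : insert y (S.erase x) ∈ univ.powersetCard s := by
    rw [mem_powersetCard_univ, card_insert_of_notMem hy', card_erase_of_mem hx, hS]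
    have : 0 < s := hS ▸ card_pos.2 ⟨x, hx⟩
    omega
  have := hmax _ hswap
  rw [sum_insert hy', ← add_sum_erase S P hx] at this
  linarith

lemma min_div_card_le_topSum (hP : IsProbDist P) (l : ℕ) :
    (min l (Fintype.card α) : ℕ) / (Fintype.card α : ℝ) ≤ topSum P l := by
  classical
  have hα : (0 : ℝ) < Fintype.card α := by
    have := hP.nonempty
    exact_mod_cast Fintype.card_pos
  obtain ⟨S, hS, hSc⟩ := exists_card_eq_forall_le (P := P) (min_le_right l (Fintype.card α))
  rw [← hS, div_le_iff₀ hα]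
  refine le_trans ?_ (mul_le_mul_of_nonneg_right (le_topSum hP.1 (hS.trans_le
    (min_le_left _ _))) hα.le)
  have hsplit := sum_add_sum_compl S P
  have hcross : (#S : ℝ) * ∑ y ∈ Sᶜ, P y ≤ (#Sᶜ : ℝ) * ∑ x ∈ S, P x := by
    rw [← nsmul_eq_mul, ← nsmul_eq_mul, ← sum_const, ← sum_const, sum_comm]
    exact sum_le_sum fun y hy => sum_le_sum fun x hx => hSc x hx y (mem_compl.1 hy)
  rw [card_compl, Nat.cast_sub (card_le_univ S)] at hcross
  rw [hP.2] at hsplit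
  nlinarith

end TopSum

section Majorization

lemma MajorizedBy.trans {P : α → ℝ} {P' : β → ℝ} {P'' : γ → ℝ} (h : MajorizedBy P P')
    (h' : MajorizedBy P' P'') : MajorizedBy P P'' :=
  fun l => (h l).trans (h' l)

variable [Fintype α] [Fintype γ]

lemma majorizedBy_push [Fintype β] {P : α → ℝ} (hP : ∀ x, 0 ≤ P x) (W : α → β) :
    MajorizedBy P (push W P) := by
  classical
  intro l
  refine topSum_le fun S hS => ?_
  calc ∑ x ∈ S, P x ≤ ∑ x with W x ∈ S.image W, P x :=
        sum_le_sum_of_subset_of_nonneg (fun x hx => by simpa using ⟨x, hx, rfl⟩)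
          fun x _ _ => hP x
    _ = ∑ y ∈ S.image W, push W P y := (sum_push_finset W P _).symm
    _ ≤ topSum (push W P) l := le_topSum (push_nonneg hP W) (card_image_le.trans hS)

lemma push_majorizedBy_of_injective {P : α → ℝ} (hP : ∀ x, 0 ≤ P x) {W : α → β}
    (hW : W.Injective) : MajorizedBy (push W P) P := by
  classical
  intro l
  refine topSum_le fun T hT => ?_
  rw [sum_push_finset]
  exact le_topSum hP ((card_le_card_of_injOn W (fun x hx => (mem_filter.1 hx).2)
    hW.injOn).trans hT)

lemma IsUniform.majorizedBy {P : α → ℝ} (hP : IsUniform P) {R : γ → ℝ} (hR : IsProbDist R)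
    (hcard : Fintype.card γ ≤ Fintype.card α) : MajorizedBy P R := by
  have : Nonempty γ := hR.nonempty
  intro l
  rw [hP.topSum_eq]
  refine le_trans ?_ (min_div_card_le_topSum hR l)
  rcases le_total l (Fintype.card γ) with hl | hl
  · rw [min_eq_left hl, min_eq_left (hl.trans hcard)]
    gcongr
  · rw [min_eq_right hl, div_self (by positivity)]
    exact div_le_one_of_le₀ (by exact_mod_cast min_le_right _ _) (by positivity)

theorem FMstore_eq_FM_of_isUniform [Fintype β] {P : α → ℝ} (hP : IsUniform P) {P₀ : γ → ℝ}
    (hP₀ : IsUniform P₀) {M : ℕ} (hγ : Fintype.card γ = min (Fintype.card α) M)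
    (hγ₀ : 0 < Fintype.card γ) (Q : β → ℝ) : FMstore P Q M = FM P₀ Q := by
  have : Nonempty γ := Fintype.card_pos_iff.1 hγ₀
  have : Nonempty α := Fintype.card_pos_iff.1 (hγ₀.trans_le (hγ ▸ min_le_left _ _))
  unfold FMstore FM
  congr 1
  ext r
  constructor
  · rintro ⟨P', P'', hP', hP'', hPP', hP'P'', rfl⟩
    refine ⟨P'', hP'', ?_, rfl⟩
    rcases min_choice (Fintype.card α) M with h | h
    · exact ((hP₀.majorizedBy hP.isProbDist (by omega)).trans hPP').trans hP'P''
    · exact (hP₀.majorizedBy hP' (by simp; omega)).trans hP'P''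
  · rintro ⟨P'', hP'', hP₀P'', rfl⟩
    obtain ⟨e⟩ : Nonempty (γ ↪ Fin M) :=
      Function.Embedding.nonempty_of_card_le (by simp; omega)
    refine ⟨push e P₀, P'', hP₀.isProbDist.push e, hP'', ?_, ?_, rfl⟩
    · exact (hP.majorizedBy hP₀.isProbDist (by omega)).trans (majorizedBy_push hP₀.nonneg e)
    · exact (push_majorizedBy_of_injective hP₀.nonneg e.injective).trans hP₀P''

end Majorization

section Deterministic

variable [Fintype α] [Fintype β]

lemma fid_nonneg (P Q : α → ℝ) : 0 ≤ fid P Q :=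
  sum_nonneg fun _ _ => Real.sqrt_nonneg _

lemma fid_le_one {P Q : α → ℝ} (hP : IsProbDist P) (hQ : IsProbDist Q) : fid P Q ≤ 1 := by
  have hAMGM (x : α) : √(P x * Q x) ≤ (P x + Q x) / 2 := by
    nlinarith [Real.sq_sqrt (mul_nonneg (hP.1 x) (hQ.1 x)), Real.sqrt_nonneg (P x * Q x),
      sq_nonneg (P x - Q x), sq_nonneg (√(P x * Q x) - (P x + Q x) / 2), hP.1 x, hQ.1 x]
  calc fid P Q ≤ ∑ x, (P x + Q x) / 2 := sum_le_sum fun x _ => hAMGM x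
    _ = 1 := by rw [← sum_div, sum_add_distrib, hP.2, hQ.2]; norm_num

lemma fid_push_le_FD {P : α → ℝ} (hP : IsProbDist P) {Q : β → ℝ} (hQ : IsProbDist Q)
    (W : α → β) : fid (push W P) Q ≤ FD P Q :=
  le_csSup ⟨1, fun _ ⟨W, hr⟩ => hr ▸ fid_le_one (hP.push W) hQ⟩ ⟨W, rfl⟩

lemma fid_push_push_le_FDstore {P : α → ℝ} (hP : IsProbDist P) {Q : β → ℝ}
    (hQ : IsProbDist Q) {M : ℕ} (W : α → Fin M) (W' : Fin M → β) :
    fid (push W' (push W P)) Q ≤ FDstore P Q M :=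
  le_csSup ⟨1, fun _ ⟨W, W', hr⟩ => hr ▸ fid_le_one ((hP.push W).push W') hQ⟩ ⟨W, W', rfl⟩

lemma FD_le_FDstore_of_push_eq [Fintype γ] {P : α → ℝ} {P' : γ → ℝ} (hP' : IsProbDist P')
    {Q : β → ℝ} (hQ : IsProbDist Q) {V : γ → α} (hV : push V P' = P) {M : ℕ}
    (hM : Fintype.card α ≤ M) : FD P Q ≤ FDstore P' Q M := by
  have : Nonempty α := (hV ▸ hP'.push V).nonempty
  obtain ⟨e⟩ : Nonempty (α ↪ Fin M) := Function.Embedding.nonempty_of_card_le (by simpa using hM)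
  refine Real.sSup_le ?_ (Real.sSup_nonneg fun _ ⟨_, _, hr⟩ => hr ▸ fid_nonneg _ _)
  rintro r ⟨W, rfl⟩
  have hfactor : push W P = push (W ∘ Function.invFun e) (push (e ∘ V) P') := by
    rw [push_push, ← hV, push_push]
    congr
    funext x
    simp [Function.leftInverse_invFun e.injective _]
  rw [hfactor]
  exact fid_push_push_le_FDstore hP' hQ _ _

lemma push_castAdd_iid {P : α → ℝ} (hP : IsProbDist P) (k j : ℕ) :
    push (fun f : Fin (k + j) → α => fun i => f (Fin.castAdd j i)) (iid P (k + j)) = iid P k := by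
  classical
  funext g
  have hprod (a : Fin k → α) (b : Fin j → α) :
      iid P (k + j) (Fin.append a b) = iid P k a * iid P j b := by
    simp [iid, Fin.prod_univ_add]
  simp only [push]
  rw [← (Fin.appendEquiv k j).sum_comp, Fintype.sum_prod_type]
  simp only [Fin.appendEquiv, Equiv.coe_fn_mk, Fin.append_left, hprod]
  simp [← mul_sum, (hP.iid j).2]

lemma FD_iid_le_FDstore_iid {P : α → ℝ} (hP : IsProbDist P) {Q : β → ℝ} (hQ : IsProbDist Q)
    {k n M : ℕ} (hkn : k ≤ n) (hM : Fintype.card α ^ k ≤ M) :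
    FD (iid P k) Q ≤ FDstore (iid P n) Q M := by
  obtain ⟨j, rfl⟩ := Nat.exists_eq_add_of_le hkn
  exact FD_le_FDstore_of_push_eq (hP.iid _) hQ (push_castAdd_iid hP k j) (by simpa using hM)

end Deterministic

section Decay

variable [Fintype α] [Fintype β]

lemma fid_push_le_card_mul [Fintype γ] {R : γ → ℝ} (hR : IsProbDist R) (W : γ → β)
    {Q : β → ℝ} {r : ℝ} (hr : 0 ≤ r) (hQ : ∀ y, Q y ≤ r ^ 2) :
    fid (push W R) Q ≤ Fintype.card γ * r := by
  classical
  have hterm (y : β) : √(push W R y * Q y) ≤ r := by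
    have h0 := push_nonneg hR.1 W y
    have h1 := (hR.push W).le_one y
    refine Real.sqrt_le_iff.2 ⟨hr, ?_⟩
    nlinarith [hQ y, sq_nonneg r]
  calc fid (push W R) Q = ∑ y ∈ univ.image W, √(push W R y * Q y) := by
        refine (sum_subset (subset_univ _) fun y _ hy => ?_).symm
        rw [push_eq_zero_of_notMem_range R (by simpa using hy), zero_mul, Real.sqrt_zero]
    _ ≤ ∑ _y ∈ univ.image W, r := sum_le_sum fun y _ => hterm y
    _ ≤ Fintype.card γ * r := by
        rw [sum_const, nsmul_eq_mul]
        gcongr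
        exact card_image_le

lemma FDstore_le_mul {P : α → ℝ} (hP : IsProbDist P) {Q : β → ℝ} {r : ℝ} (hr : 0 ≤ r)
    (hQ : ∀ y, Q y ≤ r ^ 2) (M : ℕ) : FDstore P Q M ≤ M * r :=
  Real.sSup_le (fun _ ⟨W, W', hfid⟩ => hfid ▸ by
    simpa using fid_push_le_card_mul (hP.push W) W' hr hQ) (by positivity)

lemma bddAbove_setOf_le_FDstore_iid {P : α → ℝ} (hP : IsProbDist P) {Q : β → ℝ}
    (hQ : IsProbDist Q) (hQ₁ : ∀ y, Q y < 1) {ν : ℝ} (hν : 0 < ν) (M : ℕ) :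
    BddAbove {L : ℕ | ν ≤ FDstore P (iid Q L) M} := by
  have : Nonempty β := hQ.nonempty
  obtain ⟨y₀, -, hy₀⟩ := exists_max_image univ Q univ_nonempty
  set r := √(Q y₀)
  have hr₀ : 0 ≤ r := Real.sqrt_nonneg _
  have hr₁ : r < 1 := (Real.sqrt_lt' one_pos).2 (by simpa using hQ₁ y₀)
  have hiid (L : ℕ) (f : Fin L → β) : iid Q L f ≤ (r ^ L) ^ 2 := by
    rw [← pow_mul, mul_comm, pow_mul, Real.sq_sqrt (hQ.1 y₀)]
    exact (prod_le_prod (fun i _ => hQ.1 _) fun i _ => hy₀ _ (mem_univ _)).trans_eq (by simp)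
  have hlim : Tendsto (fun L : ℕ => M * r ^ L) atTop (𝓝 0) := by
    simpa using (tendsto_pow_atTop_nhds_zero_of_lt_one hr₀ hr₁).const_mul (M : ℝ)
  obtain ⟨L₀, hL₀⟩ := eventually_atTop.1 (hlim.eventually (gt_mem_nhds hν))
  refine ⟨L₀, fun L hL => ?_⟩
  by_contra! hL₀L
  have := FDstore_le_mul hP (pow_nonneg hr₀ L) (hiid L) M
  have hνL : ν ≤ FDstore P (iid Q L) M := hL
  linarith [hL₀ L hL₀L.le]

end Decay

section Copies

variable [Fintype α] [Fintype β]

lemma one_le_FD_of_apply_eq_one {P : α → ℝ} (hP : IsProbDist P) {Q : β → ℝ}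
    (hQ : IsProbDist Q) {b : β} (hb : Q b = 1) : 1 ≤ FD P Q := by
  refine le_trans ?_ (fid_push_le_FD hP hQ fun _ => b)
  simpa [fid, push_const_apply, hP.2, hb] using
    single_le_sum (fun y _ => Real.sqrt_nonneg (push (fun _ => b) P y * Q y)) (mem_univ b)

/-- When `Q` is a point mass every number of copies is reachable, and `sSup` of the
unbounded set of admissible `L` is the junk value `0`. -/
lemma LD_eq_zero_of_apply_eq_one {P : α → ℝ} (hP : IsProbDist P) {Q : β → ℝ}
    (hQ : IsProbDist Q) {b : β} (hb : Q b = 1) {ν : ℝ} (hν : ν ≤ 1) : LD P Q ν = 0 := by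
  refine Nat.sSup_of_not_bddAbove fun hbdd => not_bddAbove_univ (hbdd.mono fun L _ => ?_)
  exact hν.trans (one_le_FD_of_apply_eq_one hP (hQ.iid L) (b := fun _ => b) (by simp [iid, hb]))

lemma LD_le_LDstore_of_FD_le [Fintype γ] {P : α → ℝ} (hP : IsProbDist P) {P' : γ → ℝ}
    (hP' : IsProbDist P') {Q : β → ℝ} (hQ : IsProbDist Q) {ν : ℝ} (hν : ν ∈ Set.Ioo 0 1)
    {M : ℕ} (h : ∀ L, FD P (iid Q L) ≤ FDstore P' (iid Q L) M) :
    LD P Q ν ≤ LDstore P' Q ν M := by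
  by_cases hpoint : ∃ b, Q b = 1
  · obtain ⟨b, hb⟩ := hpoint
    rw [LD_eq_zero_of_apply_eq_one hP hQ hb hν.2.le]
    exact Nat.zero_le _
  · simp only [not_exists] at hpoint
    refine csSup_le_csSup' (bddAbove_setOf_le_FDstore_iid hP' hQ
      (fun y => (hQ.le_one y).lt_of_ne (hpoint y)) hν.1 M) fun L hL => ?_
    exact le_trans hL (h L)

end Copies

end

/-- Proposition (opt trans cor): for the uniform source `U_N`,
`L^𝓓_n(U_N, Q | ν, m·log₂N) ≥ L^𝓓_{min{n,m}}(U_N, Q | ν)` and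
`L^𝓜_n(U_N, Q | ν, m·log₂N) = L^𝓜_{min{n,m}}(U_N, Q | ν)`, where a storage of
`m·log₂N` bits is a storage set with `N^m` elements. -/
theorem L_unif_store {β : Type*} [Fintype β] (N : ℕ) (hN : 2 ≤ N)
    (Q : β → ℝ) (hQ : IsProbDist Q) (n m : ℕ) (ν : ℝ) (hν : ν ∈ Set.Ioo (0 : ℝ) 1) :
    LD (iid (unif N) (min n m)) Q ν ≤ LDstore (iid (unif N) n) Q ν (N ^ m) ∧
    LMstore (iid (unif N) n) Q ν (N ^ m) = LM (iid (unif N) (min n m)) Q ν := by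
  have : Nonempty (Fin N) := ⟨⟨0, by omega⟩⟩
  have hU : IsProbDist (unif N) := (isUniform_unif N).isProbDist
  have hcard : N ^ min n m = min (N ^ n) (N ^ m) :=
    (pow_right_monotone (by omega)).map_min
  constructor
  · refine LD_le_LDstore_of_FD_le (hU.iid _) (hU.iid n) hQ hν fun L => ?_
    exact FD_iid_le_FDstore_iid hU (hQ.iid L) (min_le_left n m)
      (by simpa using Nat.pow_le_pow_right (by omega) (min_le_right n m))
  · have hFM (L : ℕ) := FMstore_eq_FM_of_isUniform ((isUniform_unif N).iid n)
      ((isUniform_unif N).iid (min n m)) (by simpa using hcard) Fintype.card_pos (iid Q L)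
    simp only [LMstore, LM, hFM]
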